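/- arXiv:2103.12179 — 3 statements merged into one kernel-verified Lean document; each statement's English description precedes it below -/
import Mathlib

section
/- For every x > 0 and t > 0, the kernel q*_t(x,y) = (1/π) · 4y²t / ((y²−x²)² + 2t²(y²+x²) + t⁴) is nonnegative for all y ≥ 0 and integrates to 1 over y ∈ [0,∞): ∫_0^∞ q*_t(x,y) dy = 1. -/
/-!
Writing `q_t(z) = t / (π (z² + t²))` for the Cauchy kernel, the density is the Doob transform
`(y / x) (q_t(y - x) - q_t(y + x))`. Splitting `y = (y ∓ x) ± x` turns this into
`((y - x) q_t(y - x) - (y + x) q_t(y + x)) / x + q_t(y - x) + q_t(y + x)`, whose primitive is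
explicit: the `z q_t(z)` terms integrate to `t / (2π) log (z² + t²)`, whose two copies cancel at
both ends, and the `q_t(z)` terms to `arctan (z / t) / π`, which contribute `0` at `y = 0` by
oddness and `1/2 + 1/2` at infinity.
-/

open Real MeasureTheory

/-- Transition density of the radial part of a 3-dimensional Cauchy process. -/
noncomputable def radialCauchyDensity (t x y : ℝ) : ℝ :=
  (1 / π) * (4 * y ^ 2 * t) /
    ((y ^ 2 - x ^ 2) ^ 2 + 2 * t ^ 2 * (y ^ 2 + x ^ 2) + t ^ 4)

open Filter Topology

noncomputable def cauchyKernel (t z : ℝ) : ℝ :=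
  t / (π * (z ^ 2 + t ^ 2))

lemma radialCauchyDensity_eq_mul_sub {t x : ℝ} (hx : x ≠ 0) (ht : t ≠ 0) (y : ℝ) :
    radialCauchyDensity t x y = y / x * (cauchyKernel t (y - x) - cauchyKernel t (y + x)) := by
  have hsub : (y - x) ^ 2 + t ^ 2 ≠ 0 := by positivity
  have hadd : (y + x) ^ 2 + t ^ 2 ≠ 0 := by positivity
  have hden : (y ^ 2 - x ^ 2) ^ 2 + 2 * t ^ 2 * (y ^ 2 + x ^ 2) + t ^ 4
      = ((y - x) ^ 2 + t ^ 2) * ((y + x) ^ 2 + t ^ 2) := by ring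
  rw [radialCauchyDensity, cauchyKernel, cauchyKernel, hden]
  field_simp
  ring

lemma radialCauchyDensity_nonneg {t : ℝ} (ht : 0 ≤ t) (x y : ℝ) :
    0 ≤ radialCauchyDensity t x y := by
  unfold radialCauchyDensity
  positivity

lemma hasDerivAt_arctan_div_div_pi {t : ℝ} (ht : t ≠ 0) (z : ℝ) :
    HasDerivAt (fun z => arctan (z / t) / π) (cauchyKernel t z) z := by
  have h := (((hasDerivAt_id z).div_const t).arctan).div_const π
  refine h.congr_deriv ?_
  simp only [cauchyKernel, id]
  field_simp
  ring

lemma hasDerivAt_log_sq_add_sq {t : ℝ} (ht : t ≠ 0) (z : ℝ) :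
    HasDerivAt (fun z => t / (2 * π) * log (z ^ 2 + t ^ 2)) (z * cauchyKernel t z) z := by
  have hpos : z ^ 2 + t ^ 2 ≠ 0 := by positivity
  have h := ((((hasDerivAt_id z).pow 2).add_const (t ^ 2)).log hpos).const_mul (t / (2 * π))
  refine h.congr_deriv ?_
  simp only [cauchyKernel, id, Pi.pow_apply]
  field_simp
  ring

lemma tendsto_log_sq_add_sq_sub_two_mul_log (c t : ℝ) :
    Tendsto (fun y => log ((y + c) ^ 2 + t ^ 2) - 2 * log y) atTop (𝓝 0) := by
  have hcont : ContinuousAt (fun u : ℝ => log ((1 + c * u) ^ 2 + (t * u) ^ 2)) 0 :=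
    ContinuousAt.log (by fun_prop) (by norm_num)
  have h := hcont.tendsto.comp tendsto_inv_atTop_zero
  simp only [mul_zero, add_zero, one_pow, zero_pow two_ne_zero, log_one] at h
  refine h.congr' ?_
  filter_upwards [eventually_gt_atTop |c|] with y hy
  have hy0 : 0 < y := (abs_nonneg c).trans_lt hy
  have hyc : 0 < y + c := by linarith [neg_abs_le c]
  have hscaled : (1 + c * y⁻¹) ^ 2 + (t * y⁻¹) ^ 2 = ((y + c) ^ 2 + t ^ 2) / y ^ 2 := by
    field_simp
  rw [Function.comp_apply, hscaled, log_div (by positivity) (by positivity), log_pow]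
  push_cast
  ring

lemma tendsto_arctan_add_div_atTop {t : ℝ} (ht : 0 < t) (c : ℝ) :
    Tendsto (fun y => arctan ((y + c) / t)) atTop (𝓝 (π / 2)) :=
  (tendsto_arctan_atTop.mono_right nhdsWithin_le_nhds).comp
    ((tendsto_atTop_add_const_right _ c tendsto_id).atTop_div_const ht)

noncomputable def radialCauchyPrimitive (t x y : ℝ) : ℝ :=
  (t / (2 * π) * log ((y - x) ^ 2 + t ^ 2) - t / (2 * π) * log ((y + x) ^ 2 + t ^ 2)) / x
    + (arctan ((y - x) / t) / π + arctan ((y + x) / t) / π)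

lemma hasDerivAt_radialCauchyPrimitive {t x : ℝ} (hx : x ≠ 0) (ht : t ≠ 0) (y : ℝ) :
    HasDerivAt (radialCauchyPrimitive t x) (radialCauchyDensity t x y) y := by
  have hlog := (((hasDerivAt_log_sq_add_sq ht _).comp_sub_const y x).sub
    ((hasDerivAt_log_sq_add_sq ht _).comp_add_const y x)).div_const x
  have harctan := ((hasDerivAt_arctan_div_div_pi ht _).comp_sub_const y x).add
    ((hasDerivAt_arctan_div_div_pi ht _).comp_add_const y x)
  refine (hlog.add harctan).congr_deriv ?_
  rw [radialCauchyDensity_eq_mul_sub hx ht]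
  field_simp
  ring

lemma radialCauchyPrimitive_zero (t x : ℝ) : radialCauchyPrimitive t x 0 = 0 := by
  simp [radialCauchyPrimitive, neg_div, arctan_neg]

lemma tendsto_radialCauchyPrimitive_atTop {t x : ℝ} (hx : x ≠ 0) (ht : 0 < t) :
    Tendsto (radialCauchyPrimitive t x) atTop (𝓝 1) := by
  have hlog : Tendsto (fun y => log ((y - x) ^ 2 + t ^ 2) - log ((y + x) ^ 2 + t ^ 2))
      atTop (𝓝 0) := by
    simpa [← sub_eq_add_neg] using
      (tendsto_log_sq_add_sq_sub_two_mul_log (-x) t).sub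
        (tendsto_log_sq_add_sq_sub_two_mul_log x t)
  have harctan := ((tendsto_arctan_add_div_atTop ht (-x)).div_const π).add
    ((tendsto_arctan_add_div_atTop ht x).div_const π)
  have h := ((hlog.const_mul (t / (2 * π))).div_const x).add harctan
  rw [show t / (2 * π) * 0 / x + (π / 2 / π + π / 2 / π) = 1 by field_simp; ring] at h
  refine h.congr fun y => ?_
  simp only [radialCauchyPrimitive, sub_eq_add_neg]
  ring

/-- The radial Cauchy kernel is nonnegative and conservative: it integrates to one. -/
theorem radial_cauchy_conservative (x t : ℝ) (hx : 0 < x) (ht : 0 < t) :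
    (∀ y : ℝ, 0 ≤ y → 0 ≤ radialCauchyDensity t x y) ∧
      ∫ y in Set.Ioi (0 : ℝ), radialCauchyDensity t x y = 1 := by
  refine ⟨fun y _ => radialCauchyDensity_nonneg ht.le x y, ?_⟩
  rw [integral_Ioi_of_hasDerivAt_of_nonneg'
    (fun y _ => hasDerivAt_radialCauchyPrimitive hx.ne' ht.ne' y)
    (fun y _ => radialCauchyDensity_nonneg ht.le x y)
    (tendsto_radialCauchyPrimitive_atTop hx.ne' ht), radialCauchyPrimitive_zero, sub_zero]
end

section
/- The principal value integral PV ∫_0^∞ u² log u / (u²−1)² du equals π²/8. Equivalently, lim_{ε→0⁺} [∫_0^{1−ε} + ∫_{1+ε}^∞] u² log u/(u²−1)² du = π²/8. -/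
/-!
Substituting `u ↦ u⁻¹` turns the piece over `(0, 1 - ε]` into `-∫_{(1-ε)⁻¹}^∞ log u / (u² - 1)²`,
while on `(1 + ε, ∞)` the integrand splits as `log u / (u² - 1) + log u / (u² - 1)²`. So the
truncated integral is `∫_{1+ε}^∞ log u / (u² - 1)` plus the integral of `log u / (u² - 1)²` over
the window `(1 + ε, (1 - ε)⁻¹]`, of length `O(ε²)`, on which that integrand is `O(1/ε)`.
The first term tends to `∫_1^∞ log u / (u² - 1) = ∫_0^1 log u / (u² - 1)` (again `u ↦ u⁻¹`),
and expanding `1 / (1 - u²)` geometrically turns this into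
`∑ ∫_0^1 u^{2n} (-log u) du = ∑ 1 / (2n + 1)² = π² / 8`.
-/

open Real MeasureTheory Filter Set Topology

section

variable {E : Type*} [NormedAddCommGroup E] [NormedSpace ℝ E]

theorem integral_Ioo_zero_eq_integral_Ioi_inv (G : ℝ → E) {c : ℝ} (hc : 0 < c) :
    ∫ x in Ioo 0 c⁻¹, G x = ∫ x in Ioi c, (x ^ 2)⁻¹ • G x⁻¹ := by
  rw [← inv_Ioi₀ hc, ← image_inv_eq_inv, integral_image_eq_integral_abs_deriv_smul
    measurableSet_Ioi (fun x hx => (hasDerivAt_inv (hc.trans hx).ne').hasDerivWithinAt)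
    inv_injective.injOn]
  simp only [abs_neg, abs_inv, abs_sq]

theorem tendsto_setIntegral_Ioi_add {f : ℝ → E} {a : ℝ} (hf : IntegrableOn f (Ioi a)) :
    Tendsto (fun ε => ∫ t in Ioi (a + ε), f t) (𝓝[>] 0) (𝓝 (∫ t in Ioi a, f t)) := by
  have hvol : Tendsto (volume.restrict (Ioi a) ∘ fun ε => Ioc a (a + ε)) (𝓝[>] 0) (𝓝 0) := by
    have hmeas :
        volume.restrict (Ioi a) ∘ (fun ε => Ioc a (a + ε)) = fun ε => ENNReal.ofReal ε := by
      ext ε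
      simp [Measure.restrict_apply measurableSet_Ioc, inter_eq_left.2 Ioc_subset_Ioi_self]
    rw [hmeas, ← ENNReal.ofReal_zero]
    exact ENNReal.tendsto_ofReal (tendsto_id.mono_left nhdsWithin_le_nhds)
  have hsmall := Integrable.tendsto_setIntegral_nhds_zero hf hvol
  simp only [Measure.restrict_restrict measurableSet_Ioc,
    inter_eq_left.2 Ioc_subset_Ioi_self] at hsmall
  rw [← sub_zero (∫ t in Ioi a, f t)]
  refine (tendsto_const_nhds.sub hsmall).congr' ?_
  filter_upwards [self_mem_nhdsWithin] with ε (hε : 0 < ε)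
  rw [sub_eq_iff_eq_add', ← setIntegral_union (Ioc_disjoint_Ioi le_rfl) measurableSet_Ioi
    (hf.mono_set Ioc_subset_Ioi_self) (hf.mono_set (Ioi_subset_Ioi (by linarith))),
    Ioc_union_Ioi_eq_Ioi (by linarith)]

end

theorem integral_pow_mul_neg_log (k : ℕ) :
    ∫ x in (0 : ℝ)..1, x ^ k * -log x = 1 / (k + 1) ^ 2 := by
  let F : ℝ → ℝ := fun x => x ^ (k + 1) / (k + 1) ^ 2 - x ^ (k + 1) * log x / (k + 1)
  have hF : ∀ x ∈ Ioo (0 : ℝ) 1, HasDerivAt F (x ^ k * -log x) x := by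
    intro x hx
    have hx0 : x ≠ 0 := hx.1.ne'
    refine (((hasDerivAt_pow (k + 1) x).div_const _).sub
      (((hasDerivAt_pow (k + 1) x).mul (hasDerivAt_log hx0)).div_const _)).congr_deriv ?_
    push_cast
    field_simp
    ring
  have hFc : ContinuousOn F (Icc 0 1) := by
    -- continuity at `0` comes from that of `x * log x`
    have hF_eq : F = fun x => x ^ (k + 1) / (k + 1) ^ 2 - x ^ k * (x * log x) / (k + 1) := by
      ext x
      ring
    rw [hF_eq]
    fun_prop
  rw [intervalIntegral.integral_eq_sub_of_hasDerivAt_of_le zero_le_one hFc hF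
    (intervalIntegral.intervalIntegrable_log'.neg.continuousOn_mul (continuous_pow k).continuousOn)]
  simp [F]

theorem hasSum_one_div_two_mul_add_one_sq :
    HasSum (fun n : ℕ => 1 / (2 * n + 1 : ℝ) ^ 2) (π ^ 2 / 8) := by
  have hodd : Summable (fun n : ℕ => 1 / ((2 * n + 1 : ℕ) : ℝ) ^ 2) :=
    hasSum_zeta_two.summable.comp_injective (i := fun n : ℕ => 2 * n + 1) fun a b h => by
      simp only at h
      omega
  have heven : HasSum (fun n : ℕ => 1 / ((2 * n : ℕ) : ℝ) ^ 2) (π ^ 2 / 6 / 4) := by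
    refine (hasSum_zeta_two.div_const 4).congr_fun fun n => ?_
    push_cast
    ring
  have hsum := (HasSum.even_add_odd (f := fun n : ℕ => 1 / (n : ℝ) ^ 2) heven
    hodd.hasSum).unique hasSum_zeta_two
  convert hodd.hasSum using 1
  · ext n
    push_cast
    rfl
  · linarith

theorem one_add_le_inv_one_sub {ε : ℝ} (hε₀ : 0 ≤ ε) (hε₁ : ε < 1) : 1 + ε ≤ (1 - ε)⁻¹ := by
  rw [inv_eq_one_div, le_div_iff₀ (by linarith)]
  nlinarith

theorem integral_Ioo_log_div_sq_sub_one :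
    ∫ u in Ioo (0 : ℝ) 1, log u / (u ^ 2 - 1) = π ^ 2 / 8 := by
  let F : ℕ → ℝ → ℝ := fun n u => u ^ (2 * n) * -log u
  have hF : ∀ n : ℕ, ∫ u in Ioo (0 : ℝ) 1, F n u = 1 / (2 * n + 1) ^ 2 := fun n => by
    rw [← integral_Ioc_eq_integral_Ioo, ← intervalIntegral.integral_of_le zero_le_one,
      integral_pow_mul_neg_log]
    push_cast
    rfl
  -- a non-integrable function would have integral `0`
  have hF_int : ∀ n, IntegrableOn (F n) (Ioo 0 1) := fun n =>
    Integrable.of_integral_ne_zero (by rw [hF]; positivity)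
  have hF_norm : ∀ n, ∫ u in Ioo (0 : ℝ) 1, ‖F n u‖ = ∫ u in Ioo (0 : ℝ) 1, F n u := fun n =>
    setIntegral_congr_fun measurableSet_Ioo fun u hu =>
      norm_of_nonneg (mul_nonneg (pow_nonneg hu.1.le _) (neg_nonneg.2 (log_nonpos hu.1.le hu.2.le)))
  have hsum := hasSum_integral_of_summable_integral_norm hF_int
    (by simpa only [hF_norm, hF] using hasSum_one_div_two_mul_add_one_sq.summable)
  simp only [hF] at hsum
  rw [← hsum.unique hasSum_one_div_two_mul_add_one_sq]
  refine setIntegral_congr_fun measurableSet_Ioo fun u hu => ?_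
  have hu2 : u ^ 2 < 1 := by nlinarith [hu.1, hu.2]
  have hgeom := (hasSum_geometric_of_lt_one (sq_nonneg u) hu2).mul_right (-log u)
  simp only [← pow_mul] at hgeom
  rw [hgeom.tsum_eq]
  have h1 : 1 - u ^ 2 ≠ 0 := by linarith
  have h2 : u ^ 2 - 1 ≠ 0 := by linarith
  field_simp
  ring

theorem integral_Ioi_one_log_div_sq_sub_one :
    ∫ u in Ioi (1 : ℝ), log u / (u ^ 2 - 1) = π ^ 2 / 8 := by
  have hinv := integral_Ioo_zero_eq_integral_Ioi_inv (fun u => log u / (u ^ 2 - 1)) one_pos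
  rw [inv_one] at hinv
  rw [← integral_Ioo_log_div_sq_sub_one, hinv]
  refine setIntegral_congr_fun measurableSet_Ioi fun x (hx : 1 < x) => ?_
  have hx0 : x ≠ 0 := by positivity
  have hx1 : x ^ 2 - 1 ≠ 0 := by nlinarith
  have hx1' : 1 - x ^ 2 ≠ 0 := by nlinarith
  rw [smul_eq_mul, log_inv, inv_pow]
  field_simp
  ring

theorem integrableOn_Ioi_one_log_div_sq_sub_one :
    IntegrableOn (fun u : ℝ => log u / (u ^ 2 - 1)) (Ioi 1) :=
  Integrable.of_integral_ne_zero (by rw [integral_Ioi_one_log_div_sq_sub_one]; positivity)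

theorem integrableOn_Ioi_log_div_sq_sub_one_sq {a : ℝ} (ha : 1 < a) :
    IntegrableOn (fun u : ℝ => log u / (u ^ 2 - 1) ^ 2) (Ioi a) := by
  refine ((integrableOn_Ioi_one_log_div_sq_sub_one.mono_set (Ioi_subset_Ioi ha.le)).div_const
    (a ^ 2 - 1)).mono' (measurable_log.div (by fun_prop)).aestronglyMeasurable ?_
  filter_upwards [ae_restrict_mem measurableSet_Ioi] with u (hu : a < u)
  have hlog : 0 ≤ log u := log_nonneg (by linarith)
  have ha2 : 0 < a ^ 2 - 1 := by nlinarith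
  have hu2 : a ^ 2 - 1 ≤ u ^ 2 - 1 := by nlinarith
  rw [norm_of_nonneg (div_nonneg hlog (sq_nonneg _)), pow_two (u ^ 2 - 1), ← div_div]
  exact div_le_div_of_nonneg_left (div_nonneg hlog (ha2.trans_le hu2).le) ha2 hu2

theorem integral_Ioo_zero_sq_mul_log_div_sq_sub_one_sq {c : ℝ} (hc : 0 < c) :
    ∫ u in Ioo 0 c⁻¹, u ^ 2 * log u / (u ^ 2 - 1) ^ 2 =
      -∫ u in Ioi c, log u / (u ^ 2 - 1) ^ 2 := by
  rw [integral_Ioo_zero_eq_integral_Ioi_inv _ hc, ← integral_neg]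
  refine setIntegral_congr_fun measurableSet_Ioi fun x (hx : c < x) => ?_
  have hx0 : 0 < x := hc.trans hx
  rcases eq_or_ne x 1 with rfl | hx_ne
  · simp -- both sides divide by `0`
  have hx1 : x ^ 2 - 1 ≠ 0 := by
    rw [show x ^ 2 - 1 = (x - 1) * (x + 1) by ring]
    exact mul_ne_zero (sub_ne_zero.2 hx_ne) (by linarith)
  have hx1' : 1 - x ^ 2 ≠ 0 := by
    rwa [← neg_sub, neg_ne_zero]
  rw [smul_eq_mul, log_inv, inv_pow]
  field_simp
  ring

theorem integral_Ioc_add_integral_Ioi_sq_mul_log_div_eq {ε : ℝ} (hε₀ : 0 < ε) (hε₁ : ε < 1) :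
    (∫ u in Ioc 0 (1 - ε), u ^ 2 * log u / (u ^ 2 - 1) ^ 2) +
        ∫ u in Ioi (1 + ε), u ^ 2 * log u / (u ^ 2 - 1) ^ 2 =
      (∫ u in Ioi (1 + ε), log u / (u ^ 2 - 1)) +
        ∫ u in Ioc (1 + ε) (1 - ε)⁻¹, log u / (u ^ 2 - 1) ^ 2 := by
  have ha : 1 < 1 + ε := by linarith
  have hb := one_add_le_inv_one_sub hε₀.le hε₁
  have hh := integrableOn_Ioi_one_log_div_sq_sub_one.mono_set (Ioi_subset_Ioi ha.le)
  have hg := integrableOn_Ioi_log_div_sq_sub_one_sq ha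
  have hleft : ∫ u in Ioc 0 (1 - ε), u ^ 2 * log u / (u ^ 2 - 1) ^ 2 =
      -∫ u in Ioi (1 - ε)⁻¹, log u / (u ^ 2 - 1) ^ 2 := by
    rw [integral_Ioc_eq_integral_Ioo, ← integral_Ioo_zero_sq_mul_log_div_sq_sub_one_sq
      (inv_pos.2 (by linarith)), inv_inv]
  have hright : ∫ u in Ioi (1 + ε), u ^ 2 * log u / (u ^ 2 - 1) ^ 2 =
      (∫ u in Ioi (1 + ε), log u / (u ^ 2 - 1)) + ∫ u in Ioi (1 + ε), log u / (u ^ 2 - 1) ^ 2 := by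
    rw [← integral_add hh hg]
    refine setIntegral_congr_fun measurableSet_Ioi fun u (hu : 1 + ε < u) => ?_
    have hu1 : u ^ 2 - 1 ≠ 0 := by nlinarith
    field_simp
    ring
  have hsplit : ∫ u in Ioi (1 + ε), log u / (u ^ 2 - 1) ^ 2 =
      (∫ u in Ioc (1 + ε) (1 - ε)⁻¹, log u / (u ^ 2 - 1) ^ 2) +
        ∫ u in Ioi (1 - ε)⁻¹, log u / (u ^ 2 - 1) ^ 2 := by
    rw [← setIntegral_union (Ioc_disjoint_Ioi le_rfl) measurableSet_Ioi
      (hg.mono_set Ioc_subset_Ioi_self) (hg.mono_set (Ioi_subset_Ioi hb)),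
      Ioc_union_Ioi_eq_Ioi hb]
  rw [hleft, hright, hsplit]
  ring

theorem log_div_sq_sub_one_sq_le {u : ℝ} (hu : 1 < u) :
    log u / (u ^ 2 - 1) ^ 2 ≤ 1 / (4 * (u - 1)) := by
  have hlog : log u * (4 * (u - 1)) ≤ (u - 1) * (4 * (u - 1)) :=
    mul_le_mul_of_nonneg_right (log_le_sub_one_of_pos (by linarith)) (by linarith)
  have hsq : (u - 1) * (4 * (u - 1)) ≤ (u ^ 2 - 1) ^ 2 := by
    have : 4 ≤ (u + 1) ^ 2 := by nlinarith
    nlinarith [mul_le_mul_of_nonneg_left this (sq_nonneg (u - 1))]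
  rw [div_le_div_iff₀ (pow_pos (by nlinarith) 2) (by linarith)]
  linarith

theorem norm_integral_Ioc_log_div_sq_sub_one_sq_le {a b : ℝ} (ha : 1 < a) (hab : a ≤ b) :
    ‖∫ u in Ioc a b, log u / (u ^ 2 - 1) ^ 2‖ ≤ (b - a) / (4 * (a - 1)) := by
  have hbound : ∀ u ∈ Ioc a b, ‖log u / (u ^ 2 - 1) ^ 2‖ ≤ 1 / (4 * (a - 1)) := by
    intro u ⟨hau, _⟩
    rw [norm_of_nonneg (div_nonneg (log_nonneg (by linarith)) (sq_nonneg _))]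
    exact (log_div_sq_sub_one_sq_le (ha.trans hau)).trans
      (one_div_le_one_div_of_le (by linarith) (by linarith))
  refine (norm_setIntegral_le_of_norm_le_const measure_Ioc_lt_top hbound).trans_eq ?_
  rw [Real.volume_real_Ioc_of_le hab]
  ring

theorem tendsto_integral_Ioc_log_div_sq_sub_one_sq :
    Tendsto (fun ε => ∫ u in Ioc (1 + ε) (1 - ε)⁻¹, log u / (u ^ 2 - 1) ^ 2) (𝓝[>] 0) (𝓝 0) := by
  have hlim : Tendsto (fun ε : ℝ => ε / (4 * (1 - ε))) (𝓝[>] 0) (𝓝 0) := by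
    have hcont : ContinuousAt (fun ε : ℝ => ε / (4 * (1 - ε))) 0 :=
      continuousAt_id.div (by fun_prop) (by norm_num)
    simpa using hcont.tendsto.mono_left nhdsWithin_le_nhds
  refine squeeze_zero_norm' ?_ hlim
  filter_upwards [Ioo_mem_nhdsGT one_pos] with ε ⟨hε₀, hε₁⟩
  refine (norm_integral_Ioc_log_div_sq_sub_one_sq_le (by linarith)
    (one_add_le_inv_one_sub hε₀.le hε₁)).trans_eq ?_
  have : 1 - ε ≠ 0 := by linarith
  rw [add_sub_cancel_left]
  field_simp
  ring

/-- The principal value integral `PV ∫_0^∞ u² log u / (u²−1)² du = π²/8`: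
removing a symmetric window `(1−ε, 1+ε)` around the singularity at `u = 1`
and letting `ε → 0⁺`. -/
theorem pv_integral_u_sq_log :
    Tendsto (fun ε : ℝ =>
        (∫ u in Set.Ioc (0 : ℝ) (1 - ε), u ^ 2 * Real.log u / (u ^ 2 - 1) ^ 2) +
          ∫ u in Set.Ioi (1 + ε), u ^ 2 * Real.log u / (u ^ 2 - 1) ^ 2)
      (nhdsWithin 0 (Set.Ioi 0)) (nhds (π ^ 2 / 8)) := by
  have hlim := (tendsto_setIntegral_Ioi_add integrableOn_Ioi_one_log_div_sq_sub_one).add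
    tendsto_integral_Ioc_log_div_sq_sub_one_sq
  rw [integral_Ioi_one_log_div_sq_sub_one, add_zero] at hlim
  refine hlim.congr' ?_
  filter_upwards [Ioo_mem_nhdsGT one_pos] with ε ⟨hε₀, hε₁⟩
  exact (integral_Ioc_add_integral_Ioi_sq_mul_log_div_eq hε₀ hε₁).symm
end

section
/- For every x > 0, the principal value integral PV ∫_0^∞ 2xy / ((y−x)(y+x)²) dy equals 1. -/
/-!
Partial fractions give the primitive `F y = ½ log |y - x| - ½ log |y + x| - x / (y + x)`, which
tends to `0` at infinity, so the truncated integral is `F (x - ε) - F 0 - F (x + ε)`. Here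
`F 0 = -1`, and in `F (x - ε) - F (x + ε)` the singular terms `½ log ε` cancel, leaving a
function continuous at `ε = 0` that vanishes there.
-/

open Real MeasureTheory Filter Set Topology

namespace RadialCauchy

/-- `Real.log` is `log |·|` on negative reals, so this is a primitive of `2xy/((y-x)(y+x)²)`
on each side of both singularities. -/
noncomputable def antideriv (x y : ℝ) : ℝ :=
  (log (y - x) - log (y + x)) / 2 - x / (y + x)

theorem hasDerivAt_antideriv {x y : ℝ} (hsub : y - x ≠ 0) (hadd : y + x ≠ 0) :
    HasDerivAt (antideriv x) (2 * x * y / ((y - x) * (y + x) ^ 2)) y := by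
  have h : HasDerivAt (antideriv x)
      ((1 / (y - x) - 1 / (y + x)) / 2 - (0 * (y + x) - x * 1) / (y + x) ^ 2) y :=
    ((((hasDerivAt_id y).sub_const x).log hsub).sub
      (((hasDerivAt_id y).add_const x).log hadd)).div_const 2 |>.sub
      ((hasDerivAt_const y x).div ((hasDerivAt_id y).add_const x) hadd)
  convert h using 1
  field_simp
  ring

theorem tendsto_antideriv_atTop (x : ℝ) : Tendsto (antideriv x) atTop (𝓝 0) := by
  have hinv : Tendsto (fun y : ℝ => (y + x)⁻¹) atTop (𝓝 0) :=
    tendsto_inv_atTop_zero.comp (tendsto_atTop_add_const_right _ x tendsto_id)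
  have hratio : Tendsto (fun y : ℝ => 1 - 2 * x * (y + x)⁻¹) atTop (𝓝 1) := by
    simpa using tendsto_const_nhds.sub (hinv.const_mul (2 * x))
  have h := ((continuousAt_log one_ne_zero).tendsto.comp hratio).div_const 2 |>.sub
    (hinv.const_mul x)
  rw [log_one, zero_div, mul_zero, sub_zero] at h
  refine h.congr' ?_
  filter_upwards [eventually_gt_atTop |x|] with y hy
  have hsub : y - x ≠ 0 := by have := le_abs_self x; linarith
  have hadd : y + x ≠ 0 := by have := neg_abs_le x; linarith
  rw [Function.comp_apply, antideriv, ← log_div hsub hadd]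
  congr 3
  field_simp
  ring

theorem antideriv_zero {x : ℝ} (hx : x ≠ 0) : antideriv x 0 = -1 := by
  simp [antideriv, log_neg_eq_log, hx]

theorem antideriv_sub_antideriv (x ε : ℝ) :
    antideriv x (x - ε) - antideriv x (x + ε) =
      (log (2 * x + ε) - log (2 * x - ε)) / 2 + x / (2 * x + ε) - x / (2 * x - ε) := by
  rw [antideriv, antideriv, sub_sub_cancel_left, log_neg_eq_log, add_sub_cancel_left]
  ring_nf

theorem tendsto_antideriv_sub_antideriv {x : ℝ} (hx : x ≠ 0) :
    Tendsto (fun ε => antideriv x (x - ε) - antideriv x (x + ε)) (𝓝 0) (𝓝 0) := by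
  simp_rw [antideriv_sub_antideriv]
  have h2x : 2 * x ≠ 0 := mul_ne_zero two_ne_zero hx
  have hcont : ContinuousAt (fun ε =>
      (log (2 * x + ε) - log (2 * x - ε)) / 2 + x / (2 * x + ε) - x / (2 * x - ε)) 0 := by
    fun_prop (disch := simp [h2x])
  simpa using hcont.tendsto

theorem integral_Ioc_eq_antideriv_sub {x a b : ℝ} (ha : -x < a) (hab : a ≤ b) (hb : b < x) :
    ∫ y in Ioc a b, 2 * x * y / ((y - x) * (y + x) ^ 2) = antideriv x b - antideriv x a := by
  rw [← intervalIntegral.integral_of_le hab]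
  have hsub : ∀ y ∈ Icc a b, y - x ≠ 0 := fun y hy => by linarith [hy.2]
  have hadd : ∀ y ∈ Icc a b, y + x ≠ 0 := fun y hy => by linarith [hy.1]
  refine intervalIntegral.integral_eq_sub_of_hasDerivAt (fun y hy => ?_) ?_
  · rw [uIcc_of_le hab] at hy
    exact hasDerivAt_antideriv (hsub y hy) (hadd y hy)
  · refine ContinuousOn.intervalIntegrable ?_
    rw [uIcc_of_le hab]
    exact ContinuousOn.div (by fun_prop) (by fun_prop) fun y hy =>
      mul_ne_zero (hsub y hy) (pow_ne_zero 2 (hadd y hy))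

theorem integral_Ioi_eq_neg_antideriv {x c : ℝ} (hx : 0 ≤ x) (hc : x < c) :
    ∫ y in Ioi c, 2 * x * y / ((y - x) * (y + x) ^ 2) = -antideriv x c := by
  rw [← zero_sub]
  refine integral_Ioi_of_hasDerivAt_of_nonneg' (fun y hy => ?_) (fun y hy => ?_)
    (tendsto_antideriv_atTop x)
  · have hyx : 0 < y - x := by linarith [mem_Ici.mp hy]
    exact hasDerivAt_antideriv hyx.ne' (by linarith [mem_Ici.mp hy] : 0 < y + x).ne'
  · have hyx : 0 < y - x := by linarith [mem_Ioi.mp hy]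
    have hy : 0 < y := by linarith [mem_Ioi.mp hy]
    positivity

end RadialCauchy

open RadialCauchy

/-- The principal value integral `PV ∫_0^∞ 2xy/((y−x)(y+x)²) dy = 1` for every `x > 0`. -/
theorem pv_integral_two_xy (x : ℝ) (hx : 0 < x) :
    Tendsto (fun ε : ℝ =>
        (∫ y in Set.Ioc (0 : ℝ) (x - ε), 2 * x * y / ((y - x) * (y + x) ^ 2)) +
          ∫ y in Set.Ioi (x + ε), 2 * x * y / ((y - x) * (y + x) ^ 2))
      (nhdsWithin 0 (Set.Ioi 0)) (nhds 1) := by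
  have hsum : ∀ ε ∈ Ioo 0 x,
      (∫ y in Ioc (0 : ℝ) (x - ε), 2 * x * y / ((y - x) * (y + x) ^ 2)) +
          ∫ y in Ioi (x + ε), 2 * x * y / ((y - x) * (y + x) ^ 2) =
        1 + (antideriv x (x - ε) - antideriv x (x + ε)) := by
    rintro ε ⟨hε, hεx⟩
    rw [integral_Ioc_eq_antideriv_sub (by linarith) (by linarith) (by linarith),
      integral_Ioi_eq_neg_antideriv hx.le (by linarith), antideriv_zero hx.ne']
    ring
  have hlim :
      Tendsto (fun ε => 1 + (antideriv x (x - ε) - antideriv x (x + ε))) (𝓝[>] 0) (𝓝 1) := by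
    simpa using
      ((tendsto_antideriv_sub_antideriv hx.ne').const_add 1).mono_left nhdsWithin_le_nhds
  refine hlim.congr' ?_
  filter_upwards [Ioo_mem_nhdsGT hx] with ε hε using (hsum ε hε).symm
end
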